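/- arXiv:1803.06260 — 2 statements merged into one kernel-verified Lean document; each statement's English description precedes it below -/
import Mathlib

section
/- Let E : [0, T*) → [1, ∞) be continuously differentiable and suppose E'(t) ≤ C (g(t) + 1) E(t) on [0, T*) where g(t) = ‖∇u_S(t)‖_{L∞} ≥ 0 is continuous, and additionally g(t) ≤ C' E(t) for all t. Then limsup_{t→T*} E(t) = ∞ if and only if ∫₀^{T*} g(s) ds = ∞. -/
open Real Set Filter MeasureTheory

/-- Blow-up criterion: if `E ≥ 1` is C¹ on `[0,T*)` with `E' ≤ C(g+1)E`, `g ≥ 0`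
continuous and `g ≤ C'E`, then `limsup_{t→T*} E(t) = ∞` iff `∫₀^{T*} g = ∞`. -/
theorem blowup_criterion (Tstar : ℝ) (hT : 0 < Tstar)
    (E E' g : ℝ → ℝ) (Cc Cc' : ℝ) (hCc : 0 < Cc) (hCc' : 0 < Cc')
    (hE1 : ∀ t ∈ Ico (0:ℝ) Tstar, 1 ≤ E t)
    (hEderiv : ∀ t ∈ Ico (0:ℝ) Tstar, HasDerivAt E (E' t) t)
    (hE'cont : ContinuousOn E' (Ico 0 Tstar))
    (hineq : ∀ t ∈ Ico (0:ℝ) Tstar, E' t ≤ Cc * (g t + 1) * E t)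
    (hgcont : ContinuousOn g (Ico 0 Tstar))
    (hgnonneg : ∀ t ∈ Ico (0:ℝ) Tstar, 0 ≤ g t)
    (hgE : ∀ t ∈ Ico (0:ℝ) Tstar, g t ≤ Cc' * E t) :
    (∀ M : ℝ, ∃ᶠ t in nhdsWithin Tstar (Iio Tstar), M < E t) ↔
      (∫⁻ s in Ioo (0:ℝ) Tstar, ENNReal.ofReal (g s)) = ⊤ := by
  have h0mem : (0:ℝ) ∈ Ico (0:ℝ) Tstar := ⟨le_refl 0, hT⟩
  have hEcont : ContinuousOn E (Ico 0 Tstar) := fun t ht =>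
    (hEderiv t ht).continuousAt.continuousWithinAt
  have hgcontIoo : ContinuousOn g (Ioo 0 Tstar) := hgcont.mono Ioo_subset_Ico_self
  constructor
  · -- blow-up ⇒ integral infinite
    intro hfreq
    by_contra htop
    set I := (∫⁻ s in Ioo (0:ℝ) Tstar, ENNReal.ofReal (g s)).toReal with hIdef
    have hI0 : 0 ≤ I := ENNReal.toReal_nonneg
    set B := E 0 * Real.exp (Cc * (I + Tstar)) with hBdef
    have hexp1 : (1:ℝ) ≤ Real.exp (Cc * (I + Tstar)) := by
      rw [Real.one_le_exp_iff]; positivity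
    have hbound : ∀ t ∈ Ico (0:ℝ) Tstar, E t ≤ B := by
      intro t ht
      rcases eq_or_lt_of_le ht.1 with h0 | h0
      · rw [← h0]
        nlinarith [hE1 0 h0mem]
      · -- 0 < t < Tstar : Grönwall on [0, t]
        have hsub : Icc (0:ℝ) t ⊆ Ico 0 Tstar := fun x hx => ⟨hx.1, lt_of_le_of_lt hx.2 ht.2⟩
        set G : ℝ → ℝ := fun x => ∫ s in (0:ℝ)..x, (g s + 1) with hGdef
        set F : ℝ → ℝ := fun x => E x * Real.exp (-Cc * G x) with hFdef
        have hgc : ContinuousOn (fun s => g s + 1) (Icc 0 t) :=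
          (hgcont.mono hsub).add continuousOn_const
        have hGcont : ContinuousOn G (Icc 0 t) := by
          have h := intervalIntegral.continuousOn_primitive_interval
            (f := fun s => g s + 1) (μ := volume) (a := (0:ℝ)) (b := t)
            (by rw [uIcc_of_le h0.le]; exact hgc.integrableOn_compact isCompact_Icc)
          rwa [uIcc_of_le h0.le] at h
        have hGderiv : ∀ x ∈ Ioo (0:ℝ) t, HasDerivAt G (g x + 1) x := by
          intro x hx
          have hxT : x ∈ Ioo (0:ℝ) Tstar := ⟨hx.1, hx.2.trans ht.2⟩
          have hcIoo : ContinuousOn (fun s => g s + 1) (Ioo 0 Tstar) :=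
            hgcontIoo.add continuousOn_const
          have hint : IntervalIntegrable (fun s => g s + 1) volume 0 x :=
            (hgc.mono (by rw [uIcc_of_le hx.1.le]; exact Icc_subset_Icc le_rfl hx.2.le)).intervalIntegrable
          exact intervalIntegral.integral_hasDerivAt_right hint
            (ContinuousOn.stronglyMeasurableAtFilter isOpen_Ioo hcIoo x hxT)
            (hcIoo.continuousAt (isOpen_Ioo.mem_nhds hxT))
        have hFderiv : ∀ x ∈ Ioo (0:ℝ) t,
            HasDerivAt F (E' x * Real.exp (-Cc * G x)
              + E x * (Real.exp (-Cc * G x) * (-Cc * (g x + 1)))) x := by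
          intro x hx
          have hxI : x ∈ Ico (0:ℝ) Tstar := ⟨hx.1.le, hx.2.trans ht.2⟩
          exact (hEderiv x hxI).mul (((hGderiv x hx).const_mul (-Cc)).exp)
        have hanti : AntitoneOn F (Icc 0 t) := by
          apply antitoneOn_of_deriv_nonpos (convex_Icc 0 t)
          · exact ((hEcont.mono hsub).mul
              (Real.continuous_exp.comp_continuousOn (continuousOn_const.mul hGcont)))
          · rw [interior_Icc]
            exact fun x hx => (hFderiv x hx).differentiableAt.differentiableWithinAt
          · rw [interior_Icc]
            intro x hx
            rw [(hFderiv x hx).deriv]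
            have hxI : x ∈ Ico (0:ℝ) Tstar := ⟨hx.1.le, hx.2.trans ht.2⟩
            have h1 := hineq x hxI
            have h2 := Real.exp_pos (-Cc * G x)
            nlinarith [h2.le]
        have hFt : F t ≤ F 0 :=
          hanti (left_mem_Icc.mpr h0.le) (right_mem_Icc.mpr h0.le) h0.le
        have hG0 : G 0 = 0 := intervalIntegral.integral_same
        have hF0 : F 0 = E 0 := by simp [hFdef, hG0]
        have hgint : IntervalIntegrable g volume 0 t :=
          ((hgcont.mono hsub).mono (by rw [uIcc_of_le h0.le])).intervalIntegrable
        have hgI : (∫ s in (0:ℝ)..t, g s) ≤ I := by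
          have hnn : (0:ℝ) ≤ ∫ s in (0:ℝ)..t, g s :=
            intervalIntegral.integral_nonneg h0.le
              (fun s hs => hgnonneg s ⟨hs.1, lt_of_le_of_lt hs.2 ht.2⟩)
          have hae : 0 ≤ᵐ[volume.restrict (Ioc 0 t)] g :=
            (ae_restrict_iff' measurableSet_Ioc).mpr
              (ae_of_all _ fun s hs => hgnonneg s ⟨hs.1.le, lt_of_le_of_lt hs.2 ht.2⟩)
          have heq : ENNReal.ofReal (∫ s in (0:ℝ)..t, g s)
              = ∫⁻ s in Ioc 0 t, ENNReal.ofReal (g s) := by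
            rw [intervalIntegral.integral_of_le h0.le]
            exact MeasureTheory.ofReal_integral_eq_lintegral_ofReal hgint.1 hae
          have hle : ENNReal.ofReal (∫ s in (0:ℝ)..t, g s)
              ≤ ∫⁻ s in Ioo (0:ℝ) Tstar, ENNReal.ofReal (g s) := by
            rw [heq]
            exact lintegral_mono_set (fun s hs => ⟨hs.1, lt_of_le_of_lt hs.2 ht.2⟩)
          calc (∫ s in (0:ℝ)..t, g s)
              = (ENNReal.ofReal (∫ s in (0:ℝ)..t, g s)).toReal :=
                (ENNReal.toReal_ofReal hnn).symm
            _ ≤ I := ENNReal.toReal_mono htop hle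
        have hGle : G t ≤ I + Tstar := by
          have hsplit : G t = (∫ s in (0:ℝ)..t, g s) + t := by
            show (∫ s in (0:ℝ)..t, (g s + 1)) = (∫ s in (0:ℝ)..t, g s) + t
            rw [intervalIntegral.integral_add hgint intervalIntegrable_const]
            simp
          rw [hsplit]
          linarith [ht.2.le]
        have hEt : E t = F t * Real.exp (Cc * G t) := by
          rw [hFdef, mul_assoc, ← Real.exp_add, neg_mul, neg_add_cancel, Real.exp_zero, mul_one]
        rw [hEt, hBdef]
        have hexpG : Real.exp (Cc * G t) ≤ Real.exp (Cc * (I + Tstar)) :=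
          Real.exp_le_exp.mpr (by nlinarith)
        have hF0pos : (0:ℝ) < F 0 := by rw [hF0]; linarith [hE1 0 h0mem]
        calc F t * Real.exp (Cc * G t) ≤ F 0 * Real.exp (Cc * G t) := by
              exact mul_le_mul_of_nonneg_right hFt (Real.exp_pos _).le
          _ ≤ F 0 * Real.exp (Cc * (I + Tstar)) :=
              mul_le_mul_of_nonneg_left hexpG hF0pos.le
          _ = E 0 * Real.exp (Cc * (I + Tstar)) := by rw [hF0]
    -- contradiction with frequent blow-up past B
    have hev : ∀ᶠ s in nhdsWithin Tstar (Iio Tstar), s ∈ Ico (0:ℝ) Tstar := by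
      have h1 : ∀ᶠ s in nhdsWithin Tstar (Iio Tstar), (0:ℝ) < s :=
        eventually_nhdsWithin_of_eventually_nhds (eventually_gt_nhds hT)
      filter_upwards [h1, eventually_mem_nhdsWithin] with s hs1 hs2
      exact ⟨hs1.le, hs2⟩
    rcases ((hfreq B).and_eventually hev).exists with ⟨s, hBs, hsI⟩
    exact absurd (hbound s hsI) (not_le.mpr hBs)
  · -- integral infinite ⇒ blow-up
    intro htop M
    by_contra hnot
    rw [Filter.not_frequently] at hnot
    have hnot' : {s : ℝ | ¬ M < E s} ∈ nhdsWithin Tstar (Iio Tstar) := hnot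
    rcases mem_nhdsLT_iff_exists_Ioo_subset.mp hnot' with ⟨a, ha, hsub⟩
    set t0 : ℝ := max a 0 with ht0def
    have ht0T : t0 < Tstar := max_lt ha hT
    have ht0nn : (0:ℝ) ≤ t0 := le_max_right a 0
    -- g is bounded on the compact set [0, t0]
    obtain ⟨K, hK⟩ := isCompact_Icc.exists_bound_of_continuousOn
      (hgcont.mono (fun x hx => ⟨hx.1, lt_of_le_of_lt hx.2 ht0T⟩) :
        ContinuousOn g (Icc 0 t0))
    set K' : ℝ := max K (Cc' * M) with hK'def
    have hgbd : ∀ s ∈ Ioo (0:ℝ) Tstar, g s ≤ K' := by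
      intro s hs
      rcases le_or_gt s t0 with hle | hlt
      · calc g s ≤ ‖g s‖ := le_abs_self _
          _ ≤ K := hK s ⟨hs.1.le, hle⟩
          _ ≤ K' := le_max_left _ _
      · have hsmem : s ∈ Ioo a Tstar := ⟨lt_of_le_of_lt (le_max_left a 0) hlt, hs.2⟩
        have hEM : E s ≤ M := not_lt.mp (hsub hsmem)
        have : g s ≤ Cc' * E s := hgE s ⟨hs.1.le, hs.2⟩
        calc g s ≤ Cc' * E s := this
          _ ≤ Cc' * M := by nlinarith
          _ ≤ K' := le_max_right _ _
    have hfin : (∫⁻ s in Ioo (0:ℝ) Tstar, ENNReal.ofReal (g s))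
        ≤ ENNReal.ofReal K' * volume (Ioo (0:ℝ) Tstar) := by
      calc (∫⁻ s in Ioo (0:ℝ) Tstar, ENNReal.ofReal (g s))
          ≤ ∫⁻ _ in Ioo (0:ℝ) Tstar, ENNReal.ofReal K' :=
            setLIntegral_mono' measurableSet_Ioo
              (fun s hs => ENNReal.ofReal_le_ofReal (hgbd s hs))
        _ = ENNReal.ofReal K' * volume (Ioo (0:ℝ) Tstar) := setLIntegral_const _ _
    rw [htop] at hfin
    have hlt : ENNReal.ofReal K' * volume (Ioo (0:ℝ) Tstar) < ⊤ := by
      rw [Real.volume_Ioo]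
      exact ENNReal.mul_lt_top ENNReal.ofReal_lt_top ENNReal.ofReal_lt_top
    exact absurd (lt_of_le_of_lt hfin hlt) (lt_irrefl ⊤)
end

section
/- Suppose (u_S, u_T, θ_S) ∈ C_w([0,T]; Hˢ) solves the Leray-projected ISM system ∂_t u_S + F(P u_S, u_S) − Q F(P u_S, P u_S) − P(u_T x̂) − P(θ_S ẑ) = 0 (with the u_T, θ_S equations), where P is the Leray projector, Q = I − P, and F(f,g) = f·∇g. If P u_S(0) = u_S(0), then P u_S(t) = u_S(t) for all t ∈ [0,T]; i.e., d/dt ‖Q u_S‖²_{L²} = 0 along solutions. -/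
open Real Set
open scoped RealInnerProductSpace

/-- Abstract form of the preservation of the divergence-free constraint for the
Leray-projected ISM: if `u' = −F(Pu, u) + Q F(Pu, Pu) + ℓ` with `P` an idempotent
symmetric projector, `Q = I − P`, `F(f,·)` linear, `⟪F(f,g), g⟫ = 0` whenever `Pf = f`,
and `P ℓ = ℓ`, then `P u(0) = u(0)` implies `P u(t) = u(t)` for all `t ∈ [0,T]`
(i.e. `d/dt ‖Q u‖² = 0` along solutions). -/
theorem leray_constraint_preserved
    {H : Type*} [NormedAddCommGroup H] [InnerProductSpace ℝ H] [CompleteSpace H]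
    (P : H →ₗ[ℝ] H)
    (hidem : ∀ x : H, P (P x) = P x)
    (hsym : ∀ x y : H, ⟪P x, y⟫ = ⟪x, P y⟫)
    (F : H → H → H)
    (hFlin : ∀ f : H, IsLinearMap ℝ (F f))
    (hFskew : ∀ f g : H, P f = f → ⟪F f g, g⟫ = 0)
    (T : ℝ) (hT : 0 < T)
    (ℓ : ℝ → H) (hℓ : ∀ t : ℝ, P (ℓ t) = ℓ t)
    (u : ℝ → H)
    (hu : ∀ t ∈ Icc (0:ℝ) T, HasDerivAt u
      (-(F (P (u t)) (u t)) +
        (F (P (u t)) (P (u t)) - P (F (P (u t)) (P (u t)))) + ℓ t) t)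
    (h0 : P (u 0) = u 0) :
    ∀ t ∈ Icc (0:ℝ) T, P (u t) = u t := by
  have hPcont : Continuous P := LinearMap.IsSymmetric.continuous (T := P) hsym
  set Pc : H →L[ℝ] H := ⟨P, hPcont⟩ with hPc
  set q : ℝ → H := fun t => u t - P (u t) with hq
  have hPq : ∀ t, P (q t) = 0 := by
    intro t; simp [hq, map_sub, hidem]
  -- inner products with q vanish for anything in range of P
  have hPinner : ∀ (x : H) (t : ℝ), ⟪P x, q t⟫ = 0 := by
    intro x t; rw [hsym, hPq, inner_zero_right]
  -- the derivative of ‖q‖² is zero on [0,T]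
  have hq' : ∀ t ∈ Icc (0:ℝ) T, HasDerivAt (fun s => ⟪q s, q s⟫) 0 t := by
    intro t ht
    set v := u t with hv
    set D := -(F (P v) v) + (F (P v) (P v) - P (F (P v) (P v))) + ℓ t with hD
    have hud : HasDerivAt u D t := hu t ht
    have hPud : HasDerivAt (fun s => P (u s)) (P D) t :=
      (Pc.hasFDerivAt.comp_hasDerivAt t hud : HasDerivAt (fun s => Pc (u s)) (Pc D) t)
    have hqd : HasDerivAt q (D - P D) t := hud.sub hPud
    have key : ⟪D - P D, q t⟫ = 0 := by
      have h1 : ⟪P D, q t⟫ = 0 := hPinner D t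
      have h2 : ⟪D, q t⟫ = 0 := by
        have hsplit : F (P v) v = F (P v) (P v) + F (P v) (q t) := by
          have hvq : v = P v + q t := by simp [hq, hv]
          nth_rewrite 2 [hvq]
          exact (hFlin (P v)).map_add _ _
        have hskew : ⟪F (P v) (q t), q t⟫ = 0 := hFskew (P v) (q t) (hidem v)
        have hl : ⟪ℓ t, q t⟫ = 0 := by rw [← hℓ t]; exact hPinner (ℓ t) t
        have hPF : ⟪P (F (P v) (P v)), q t⟫ = 0 := hPinner _ t
        rw [hD, inner_add_left, inner_add_left, inner_neg_left, inner_sub_left,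
          hsplit, inner_add_left, hskew, hPF, hl]
        ring
      rw [inner_sub_left, h1, h2, sub_zero]
    have := (hqd.inner ℝ hqd)
    have k2 : (⟪q t, D - P D⟫ : ℝ) = 0 := by rw [real_inner_comm]; exact key
    have hzero : (⟪q t, D - P D⟫ + ⟪D - P D, q t⟫ : ℝ) = 0 := by rw [k2, key]; ring
    rw [hzero] at this
    exact this
  -- ‖q‖² is constant, equal to 0 at t = 0
  have hcont : ContinuousOn (fun s => ⟪q s, q s⟫) (Icc (0:ℝ) T) := by
    intro t ht
    exact ((hq' t ht).continuousAt).continuousWithinAt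
  have hconst : ∀ t ∈ Icc (0:ℝ) T, ⟪q t, q t⟫ = ⟪q 0, q 0⟫ := by
    refine constant_of_has_deriv_right_zero hcont ?_
    intro x hx
    exact ((hq' x (Ico_subset_Icc_self hx)).hasDerivWithinAt)
  have hq0 : q 0 = 0 := by simp [hq, h0]
  intro t ht
  have : ⟪q t, q t⟫ = 0 := by rw [hconst t ht, hq0, inner_zero_left]
  have hqt : q t = 0 := inner_self_eq_zero.mp this
  exact (sub_eq_zero.mp hqt).symm
end
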